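/- (Corollary for the family a·(D+b).) Let I ⊆ (0,∞) be an open interval, D : I → ℝ three times continuously differentiable with D(p) > 0 and D'(p) < 0 on I, and R(p) := p·D(p) with R''(p) < 0 on I. Let a > 0 and b < 0 with D(p) + b > 0 on I, and set D_L(p) := a·(D(p) + b) and D_H := D. Suppose there exist p_L*, p_H* ∈ I with R'(p_L*) = −b and R'(p_H*) = 0; then p_L* < p_H*, D_L and D_H together with these monopoly prices form a binary monopoly model, and for every α ∈ (0,1]: (i) for all p ∈ (p_L*, p_H*), the derivative of the marginal expression satisfies E_α'(p) = (R_L'(p) − R_H'(p)) · ( −(1−2α) + (d/dp)[α·p·D'(p)/R''(p)] ), where R_L(p) = p·D_L(p) and R_H(p) = p·D(p); (ii) the value function W^α is concave on [0,1] if and only if p ↦ (2α−1)·p + α·p·D'(p)/R''(p) is nondecreasing on (p_L*, p_H*), and W^α is convex on [0,1] if and only if that map is nonincreasing on (p_L*, p_H*). -/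

import Mathlib

/-!
Solving the first-order condition for the belief gives `μ = R_L'(p) / (R_L'(p) - R_H'(p))`, a
strictly increasing function of `p` on `[p_L*, p_H*]` (its derivative is the Wronskian of
`R_L'`, `R_H'` divided by a square), so the price map is its continuous, differentiable inverse.
The envelope computation then gives `W'(μ) = E(p(μ))`, hence `W` is concave (convex) iff `E` is
nonincreasing (nondecreasing) on `(p_L*, p_H*)`. For `D_L = a (D + b)` one has
`R_L' = a R' + a b`, the ratio in `E` collapses to `α p D' / R''`, and
`E' = (R_L' - R_H') ((2α - 1) + (α p D' / R'')')` with `R_L' - R_H' < 0` between the monopoly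
prices.
-/

open Set Filter Topology

section Calculus

variable {f f' h h' g : ℝ → ℝ} {a b : ℝ}

theorem monotoneOn_Ioo_iff_forall_deriv_nonneg (hf : ∀ x ∈ Ioo a b, HasDerivAt f (f' x) x) :
    MonotoneOn f (Ioo a b) ↔ ∀ x ∈ Ioo a b, 0 ≤ f' x := by
  refine ⟨fun hm x hx => ?_, fun hpos => ?_⟩
  · exact (hf x hx).hasDerivWithinAt.nonneg_of_monotoneOn
      (isOpen_Ioo.uniqueDiffWithinAt (𝕜 := ℝ) hx).accPt hm
  · refine monotoneOn_of_deriv_nonneg (convex_Ioo a b) (HasDerivAt.continuousOn hf)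
      (fun x hx => (hf x (interior_subset hx)).differentiableAt.differentiableWithinAt)
      fun x hx => ?_
    rw [interior_Ioo] at hx
    rw [(hf x hx).deriv]
    exact hpos x hx

theorem antitoneOn_Ioo_iff_forall_deriv_nonpos (hf : ∀ x ∈ Ioo a b, HasDerivAt f (f' x) x) :
    AntitoneOn f (Ioo a b) ↔ ∀ x ∈ Ioo a b, f' x ≤ 0 := by
  refine ⟨fun hm x hx => ?_, fun hneg => ?_⟩
  · exact (hf x hx).hasDerivWithinAt.nonpos_of_antitoneOn
      (isOpen_Ioo.uniqueDiffWithinAt (𝕜 := ℝ) hx).accPt hm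
  · refine antitoneOn_of_deriv_nonpos (convex_Ioo a b) (HasDerivAt.continuousOn hf)
      (fun x hx => (hf x (interior_subset hx)).differentiableAt.differentiableWithinAt)
      fun x hx => ?_
    rw [interior_Ioo] at hx
    rw [(hf x hx).deriv]
    exact hneg x hx

theorem antitoneOn_Ioo_iff_monotoneOn_of_hasDerivAt_mul_neg
    (hf : ∀ x ∈ Ioo a b, HasDerivAt f (g x * h' x) x)
    (hh : ∀ x ∈ Ioo a b, HasDerivAt h (h' x) x)
    (hg : ∀ x ∈ Ioo a b, g x < 0) : AntitoneOn f (Ioo a b) ↔ MonotoneOn h (Ioo a b) := by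
  rw [antitoneOn_Ioo_iff_forall_deriv_nonpos hf, monotoneOn_Ioo_iff_forall_deriv_nonneg hh]
  refine forall₂_congr fun x hx => ?_
  rw [← neg_nonneg, ← neg_mul]
  exact mul_nonneg_iff_of_pos_left (neg_pos.2 (hg x hx))

theorem monotoneOn_Ioo_iff_antitoneOn_of_hasDerivAt_mul_neg
    (hf : ∀ x ∈ Ioo a b, HasDerivAt f (g x * h' x) x)
    (hh : ∀ x ∈ Ioo a b, HasDerivAt h (h' x) x)
    (hg : ∀ x ∈ Ioo a b, g x < 0) : MonotoneOn f (Ioo a b) ↔ AntitoneOn h (Ioo a b) := by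
  rw [monotoneOn_Ioo_iff_forall_deriv_nonneg hf, antitoneOn_Ioo_iff_forall_deriv_nonpos hh]
  refine forall₂_congr fun x hx => ?_
  rw [← neg_mul_neg, mul_nonneg_iff_of_pos_left (neg_pos.2 (hg x hx)), neg_nonneg]

theorem concaveOn_Icc_iff_antitoneOn_deriv (hc : ContinuousOn f (Icc a b))
    (hd : ∀ x ∈ Ioo a b, DifferentiableAt ℝ f x) :
    ConcaveOn ℝ (Icc a b) f ↔ AntitoneOn (deriv f) (Ioo a b) := by
  refine ⟨fun hconc => (hconc.subset Ioo_subset_Icc_self (convex_Ioo a b)).antitoneOn_deriv hd,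
    fun hanti => ?_⟩
  refine AntitoneOn.concaveOn_of_deriv (convex_Icc a b) hc ?_ (by rwa [interior_Icc])
  rw [interior_Icc]
  exact fun x hx => (hd x hx).differentiableWithinAt

theorem convexOn_Icc_iff_monotoneOn_deriv (hc : ContinuousOn f (Icc a b))
    (hd : ∀ x ∈ Ioo a b, DifferentiableAt ℝ f x) :
    ConvexOn ℝ (Icc a b) f ↔ MonotoneOn (deriv f) (Ioo a b) := by
  refine ⟨fun hconv => (hconv.subset Ioo_subset_Icc_self (convex_Ioo a b)).monotoneOn_deriv hd,
    fun hmono => ?_⟩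
  refine MonotoneOn.convexOn_of_deriv (convex_Icc a b) hc ?_ (by rwa [interior_Icc])
  rw [interior_Icc]
  exact fun x hx => (hd x hx).differentiableWithinAt

theorem strictAntiOn_Icc_of_deriv_neg (hd : ∀ x ∈ Icc a b, DifferentiableAt ℝ f x)
    (hneg : ∀ x ∈ Icc a b, deriv f x < 0) : StrictAntiOn f (Icc a b) :=
  strictAntiOn_of_deriv_neg (convex_Icc a b)
    (fun x hx => (hd x hx).continuousAt.continuousWithinAt)
    fun x hx => hneg x (interior_subset hx)

theorem MonotoneOn.continuousOn_Icc_of_image_eq {c d : ℝ} (hab : a ≤ b)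
    (hf : MonotoneOn f (Icc a b)) (himg : f '' Icc a b = Icc c d) : ContinuousOn f (Icc a b) := by
  let g : ℝ → Icc c d := fun x =>
    ⟨f (projIcc a b hab x), himg ▸ mem_image_of_mem f (projIcc a b hab x).2⟩
  have hg : Monotone g := fun x y hxy =>
    hf (projIcc a b hab x).2 (projIcc a b hab y).2 (monotone_projIcc hab hxy)
  have hgs : Function.Surjective g := by
    rintro ⟨y, hy⟩
    rw [← himg] at hy
    obtain ⟨x, hx, rfl⟩ := hy
    exact ⟨x, by simp [g, projIcc_of_mem hab hx]⟩
  refine (continuous_subtype_val.comp (hg.continuous_of_surjective hgs)).continuousOn.congr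
    fun x hx => ?_
  simp [g, projIcc_of_mem hab hx]

end Calculus

theorem StrictMonoOn.antitoneOn_comp_iff {α β γ : Type*} [LinearOrder α] [Preorder β]
    [Preorder γ] {p : α → β} {E : β → γ} {s : Set α} (hp : StrictMonoOn p s) :
    AntitoneOn (E ∘ p) s ↔ AntitoneOn E (p '' s) := by
  refine ⟨?_, fun hE μ hμ ν hν hμν => hE (mem_image_of_mem p hμ) (mem_image_of_mem p hν)
    (hp.monotoneOn hμ hν hμν)⟩
  rintro hE _ ⟨μ, hμ, rfl⟩ _ ⟨ν, hν, rfl⟩ hle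
  exact hE hμ hν ((hp.le_iff_le hμ hν).1 hle)

theorem StrictMonoOn.monotoneOn_comp_iff {α β γ : Type*} [LinearOrder α] [Preorder β]
    [Preorder γ] {p : α → β} {E : β → γ} {s : Set α} (hp : StrictMonoOn p s) :
    MonotoneOn (E ∘ p) s ↔ MonotoneOn E (p '' s) := by
  refine ⟨?_, fun hE μ hμ ν hν hμν => hE (mem_image_of_mem p hμ) (mem_image_of_mem p hν)
    (hp.monotoneOn hμ hν hμν)⟩
  rintro hE _ ⟨μ, hμ, rfl⟩ _ ⟨ν, hν, rfl⟩ hle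
  exact hE hμ hν ((hp.le_iff_le hμ hν).1 hle)

structure BinaryMonopoly (RL RH : ℝ → ℝ) (pL pH : ℝ) : Prop where
  lt : pL < pH
  differentiableAt_deriv_left : ∀ q ∈ Icc pL pH, DifferentiableAt ℝ (deriv RL) q
  differentiableAt_deriv_right : ∀ q ∈ Icc pL pH, DifferentiableAt ℝ (deriv RH) q
  deriv_deriv_left_neg : ∀ q ∈ Icc pL pH, deriv (deriv RL) q < 0
  deriv_deriv_right_neg : ∀ q ∈ Icc pL pH, deriv (deriv RH) q < 0
  deriv_left_eq_zero : deriv RL pL = 0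
  deriv_right_eq_zero : deriv RH pH = 0

def IsPriceMap (RL RH : ℝ → ℝ) (pL pH : ℝ) (p : ℝ → ℝ) : Prop :=
  ∀ μ ∈ Icc (0:ℝ) 1,
    p μ ∈ Icc pL pH ∧ (1 - μ) * deriv RL (p μ) + μ * deriv RH (p μ) = 0

/-- The belief `μ` solving the first-order condition `(1 - μ) R_L'(q) + μ R_H'(q) = 0`. -/
noncomputable def beliefOfPrice (RL RH : ℝ → ℝ) (q : ℝ) : ℝ :=
  deriv RL q / (deriv RL q - deriv RH q)

def valueOfBelief (VL VH p : ℝ → ℝ) (μ : ℝ) : ℝ :=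
  (1 - μ) * VL (p μ) + μ * VH (p μ)

noncomputable def marginalValue (VL VH RL RH : ℝ → ℝ) (q : ℝ) : ℝ :=
  VH q - VL q +
    (deriv VL q - (deriv RL q / deriv RH q) * deriv VH q) /
      (deriv (deriv RL) q - (deriv RL q / deriv RH q) * deriv (deriv RH) q) *
      (deriv RL q - deriv RH q)

namespace BinaryMonopoly

variable {RL RH VL VH p : ℝ → ℝ} {pL pH q μ : ℝ}

theorem strictAntiOn_deriv_left (M : BinaryMonopoly RL RH pL pH) :
    StrictAntiOn (deriv RL) (Icc pL pH) :=
  strictAntiOn_Icc_of_deriv_neg M.differentiableAt_deriv_left M.deriv_deriv_left_neg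

theorem strictAntiOn_deriv_right (M : BinaryMonopoly RL RH pL pH) :
    StrictAntiOn (deriv RH) (Icc pL pH) :=
  strictAntiOn_Icc_of_deriv_neg M.differentiableAt_deriv_right M.deriv_deriv_right_neg

theorem deriv_left_nonpos (M : BinaryMonopoly RL RH pL pH) (hq : q ∈ Icc pL pH) :
    deriv RL q ≤ 0 :=
  M.deriv_left_eq_zero ▸ M.strictAntiOn_deriv_left.antitoneOn (left_mem_Icc.2 M.lt.le) hq hq.1

theorem deriv_left_neg (M : BinaryMonopoly RL RH pL pH) (hq : q ∈ Icc pL pH) (hlt : pL < q) :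
    deriv RL q < 0 :=
  M.deriv_left_eq_zero ▸ M.strictAntiOn_deriv_left (left_mem_Icc.2 M.lt.le) hq hlt

theorem deriv_right_pos (M : BinaryMonopoly RL RH pL pH) (hq : q ∈ Icc pL pH) (hlt : q < pH) :
    0 < deriv RH q :=
  M.deriv_right_eq_zero ▸ M.strictAntiOn_deriv_right hq (right_mem_Icc.2 M.lt.le) hlt

theorem deriv_sub_neg (M : BinaryMonopoly RL RH pL pH) (hq : q ∈ Icc pL pH) :
    deriv RL q - deriv RH q < 0 := by
  rcases hq.2.lt_or_eq with h | rfl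
  · linarith [M.deriv_left_nonpos hq, M.deriv_right_pos hq h]
  · linarith [M.deriv_left_neg hq M.lt, M.deriv_right_eq_zero]

theorem wronskian_pos (M : BinaryMonopoly RL RH pL pH) (hq : q ∈ Icc pL pH) :
    0 < deriv RL q * deriv (deriv RH) q - deriv (deriv RL) q * deriv RH q := by
  have hL := M.deriv_deriv_left_neg q hq
  have hH := M.deriv_deriv_right_neg q hq
  rcases hq.2.lt_or_eq with h | rfl
  · nlinarith [mul_nonneg_of_nonpos_of_nonpos (M.deriv_left_nonpos hq) hH.le,
      mul_pos_of_neg_of_neg hL (neg_neg_of_pos (M.deriv_right_pos hq h))]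
  · rw [M.deriv_right_eq_zero, mul_zero, sub_zero]
    exact mul_pos_of_neg_of_neg (M.deriv_left_neg hq M.lt) hH

theorem hasDerivAt_beliefOfPrice (M : BinaryMonopoly RL RH pL pH) (hq : q ∈ Icc pL pH) :
    HasDerivAt (beliefOfPrice RL RH)
      ((deriv RL q * deriv (deriv RH) q - deriv (deriv RL) q * deriv RH q) /
        (deriv RL q - deriv RH q) ^ 2) q := by
  have hL := (M.differentiableAt_deriv_left q hq).hasDerivAt
  have hH := (M.differentiableAt_deriv_right q hq).hasDerivAt
  refine (hL.div (hL.sub hH) (M.deriv_sub_neg hq).ne).congr_deriv ?_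
  rw [Pi.sub_apply]
  ring

theorem beliefOfPrice_deriv_pos (M : BinaryMonopoly RL RH pL pH) (hq : q ∈ Icc pL pH) :
    0 < (deriv RL q * deriv (deriv RH) q - deriv (deriv RL) q * deriv RH q) /
        (deriv RL q - deriv RH q) ^ 2 :=
  div_pos (M.wronskian_pos hq) (sq_pos_of_neg (M.deriv_sub_neg hq))

theorem strictMonoOn_beliefOfPrice (M : BinaryMonopoly RL RH pL pH) :
    StrictMonoOn (beliefOfPrice RL RH) (Icc pL pH) :=
  strictMonoOn_of_deriv_pos (convex_Icc pL pH)
    (HasDerivAt.continuousOn fun _ hq => M.hasDerivAt_beliefOfPrice hq) fun q hq => by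
      rw [(M.hasDerivAt_beliefOfPrice (interior_subset hq)).deriv]
      exact M.beliefOfPrice_deriv_pos (interior_subset hq)

theorem beliefOfPrice_left (M : BinaryMonopoly RL RH pL pH) : beliefOfPrice RL RH pL = 0 := by
  simp [beliefOfPrice, M.deriv_left_eq_zero]

theorem beliefOfPrice_right (M : BinaryMonopoly RL RH pL pH) : beliefOfPrice RL RH pH = 1 := by
  rw [beliefOfPrice, M.deriv_right_eq_zero, sub_zero,
    div_self (M.deriv_left_neg (right_mem_Icc.2 M.lt.le) M.lt).ne]

theorem beliefOfPrice_mem_Icc (M : BinaryMonopoly RL RH pL pH) (hq : q ∈ Icc pL pH) :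
    beliefOfPrice RL RH q ∈ Icc 0 1 := by
  have hmono := M.strictMonoOn_beliefOfPrice.monotoneOn
  rw [← M.beliefOfPrice_left, ← M.beliefOfPrice_right]
  exact ⟨hmono (left_mem_Icc.2 M.lt.le) hq hq.1, hmono hq (right_mem_Icc.2 M.lt.le) hq.2⟩

theorem beliefOfPrice_mem_Ioo (M : BinaryMonopoly RL RH pL pH) (hq : q ∈ Ioo pL pH) :
    beliefOfPrice RL RH q ∈ Ioo 0 1 := by
  have hmono := M.strictMonoOn_beliefOfPrice
  rw [← M.beliefOfPrice_left, ← M.beliefOfPrice_right]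
  exact ⟨hmono (left_mem_Icc.2 M.lt.le) (Ioo_subset_Icc_self hq) hq.1,
    hmono (Ioo_subset_Icc_self hq) (right_mem_Icc.2 M.lt.le) hq.2⟩

theorem beliefOfPrice_priceMap (M : BinaryMonopoly RL RH pL pH) (hp : IsPriceMap RL RH pL pH p)
    (hμ : μ ∈ Icc 0 1) : beliefOfPrice RL RH (p μ) = μ := by
  obtain ⟨hmem, hfoc⟩ := hp μ hμ
  rw [beliefOfPrice, div_eq_iff (M.deriv_sub_neg hmem).ne]
  linear_combination hfoc

theorem priceMap_beliefOfPrice (M : BinaryMonopoly RL RH pL pH) (hp : IsPriceMap RL RH pL pH p)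
    (hq : q ∈ Icc pL pH) : p (beliefOfPrice RL RH q) = q :=
  M.strictMonoOn_beliefOfPrice.injOn (hp _ (M.beliefOfPrice_mem_Icc hq)).1 hq
    (M.beliefOfPrice_priceMap hp (M.beliefOfPrice_mem_Icc hq))

theorem strictMonoOn_priceMap (M : BinaryMonopoly RL RH pL pH) (hp : IsPriceMap RL RH pL pH p) :
    StrictMonoOn p (Icc 0 1) := fun μ hμ ν hν hlt =>
  (M.strictMonoOn_beliefOfPrice.lt_iff_lt (hp μ hμ).1 (hp ν hν).1).1
    (by rwa [M.beliefOfPrice_priceMap hp hμ, M.beliefOfPrice_priceMap hp hν])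

theorem image_priceMap_Icc (M : BinaryMonopoly RL RH pL pH) (hp : IsPriceMap RL RH pL pH p) :
    p '' Icc 0 1 = Icc pL pH :=
  Subset.antisymm (image_subset_iff.2 fun μ hμ => (hp μ hμ).1) fun _ hq =>
    ⟨_, M.beliefOfPrice_mem_Icc hq, M.priceMap_beliefOfPrice hp hq⟩

theorem image_priceMap_Ioo (M : BinaryMonopoly RL RH pL pH) (hp : IsPriceMap RL RH pL pH p) :
    p '' Ioo 0 1 = Ioo pL pH := by
  refine Subset.antisymm (image_subset_iff.2 fun μ hμ => ?_) fun q hq =>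
    ⟨_, M.beliefOfPrice_mem_Ioo hq, M.priceMap_beliefOfPrice hp (Ioo_subset_Icc_self hq)⟩
  have hmono := M.strictMonoOn_priceMap hp
  have h0 : p 0 = pL :=
    M.beliefOfPrice_left ▸ M.priceMap_beliefOfPrice hp (left_mem_Icc.2 M.lt.le)
  have h1 : p 1 = pH :=
    M.beliefOfPrice_right ▸ M.priceMap_beliefOfPrice hp (right_mem_Icc.2 M.lt.le)
  rw [← h0, ← h1]
  exact ⟨hmono (left_mem_Icc.2 zero_le_one) (Ioo_subset_Icc_self hμ) hμ.1,
    hmono (Ioo_subset_Icc_self hμ) (right_mem_Icc.2 zero_le_one) hμ.2⟩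

theorem continuousOn_priceMap (M : BinaryMonopoly RL RH pL pH) (hp : IsPriceMap RL RH pL pH p) :
    ContinuousOn p (Icc 0 1) :=
  (M.strictMonoOn_priceMap hp).monotoneOn.continuousOn_Icc_of_image_eq zero_le_one
    (M.image_priceMap_Icc hp)

theorem hasDerivAt_priceMap (M : BinaryMonopoly RL RH pL pH) (hp : IsPriceMap RL RH pL pH p)
    (hμ : μ ∈ Ioo 0 1) :
    HasDerivAt p ((deriv RL (p μ) - deriv RH (p μ)) ^ 2 /
      (deriv RL (p μ) * deriv (deriv RH) (p μ) - deriv (deriv RL) (p μ) * deriv RH (p μ)))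
      μ := by
  have hmem := (hp μ (Ioo_subset_Icc_self hμ)).1
  have hinv := HasDerivAt.of_local_left_inverse
    ((M.continuousOn_priceMap hp).continuousAt (Icc_mem_nhds hμ.1 hμ.2))
    (M.hasDerivAt_beliefOfPrice hmem) (M.beliefOfPrice_deriv_pos hmem).ne'
    (eventually_of_mem (Ioo_mem_nhds hμ.1 hμ.2) fun ν hν =>
      M.beliefOfPrice_priceMap hp (Ioo_subset_Icc_self hν))
  rwa [inv_div] at hinv

theorem hasDerivAt_valueOfBelief (M : BinaryMonopoly RL RH pL pH) (hp : IsPriceMap RL RH pL pH p)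
    (hVL : ∀ q ∈ Icc pL pH, DifferentiableAt ℝ VL q)
    (hVH : ∀ q ∈ Icc pL pH, DifferentiableAt ℝ VH q) (hμ : μ ∈ Ioo 0 1) :
    HasDerivAt (valueOfBelief VL VH p) (marginalValue VL VH RL RH (p μ)) μ := by
  have hq : p μ ∈ Ioo pL pH := M.image_priceMap_Ioo hp ▸ mem_image_of_mem p hμ
  have hp' := M.hasDerivAt_priceMap hp hμ
  have hW : HasDerivAt (valueOfBelief VL VH p) _ μ :=
    (((hasDerivAt_id μ).const_sub 1).mul
        ((hVL _ (Ioo_subset_Icc_self hq)).hasDerivAt.comp μ hp')).add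
      ((hasDerivAt_id μ).mul ((hVH _ (Ioo_subset_Icc_self hq)).hasDerivAt.comp μ hp'))
  refine hW.congr_deriv ?_
  -- `μ` is eliminated through the first-order condition `μ = beliefOfPrice RL RH (p μ)`.
  have hμq := M.beliefOfPrice_priceMap hp (Ioo_subset_Icc_self hμ)
  have hH : deriv RH (p μ) ≠ 0 := (M.deriv_right_pos (Ioo_subset_Icc_self hq) hq.2).ne'
  have hLH := (M.deriv_sub_neg (Ioo_subset_Icc_self hq)).ne
  simp only [Function.comp_apply, id]
  generalize p μ = q at *
  subst hμq
  unfold marginalValue beliefOfPrice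
  generalize deriv (deriv RL) q = f' at *
  generalize deriv (deriv RH) q = g' at *
  generalize deriv RL q = f at *
  generalize deriv RH q = g at *
  have hden : f' - f / g * g' = -(f * g' - f' * g) / g := by field_simp; ring
  rw [hden]
  field_simp
  ring

theorem continuousOn_valueOfBelief (M : BinaryMonopoly RL RH pL pH)
    (hp : IsPriceMap RL RH pL pH p) (hVL : ∀ q ∈ Icc pL pH, DifferentiableAt ℝ VL q)
    (hVH : ∀ q ∈ Icc pL pH, DifferentiableAt ℝ VH q) :
    ContinuousOn (valueOfBelief VL VH p) (Icc 0 1) := by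
  have hmaps : MapsTo p (Icc 0 1) (Icc pL pH) := fun μ hμ => (hp μ hμ).1
  have hL : ContinuousOn VL (Icc pL pH) := fun q hq => (hVL q hq).continuousAt.continuousWithinAt
  have hH : ContinuousOn VH (Icc pL pH) := fun q hq => (hVH q hq).continuousAt.continuousWithinAt
  have hcp := M.continuousOn_priceMap hp
  exact ((continuousOn_const.sub continuousOn_id).mul (hL.comp hcp hmaps)).add
    (continuousOn_id.mul (hH.comp hcp hmaps))

theorem concaveOn_valueOfBelief_iff (M : BinaryMonopoly RL RH pL pH)
    (hp : IsPriceMap RL RH pL pH p) (hVL : ∀ q ∈ Icc pL pH, DifferentiableAt ℝ VL q)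
    (hVH : ∀ q ∈ Icc pL pH, DifferentiableAt ℝ VH q) :
    ConcaveOn ℝ (Icc 0 1) (valueOfBelief VL VH p) ↔
      AntitoneOn (marginalValue VL VH RL RH) (Ioo pL pH) := by
  have hW := fun μ (hμ : μ ∈ Ioo (0:ℝ) 1) => M.hasDerivAt_valueOfBelief hp hVL hVH hμ
  rw [concaveOn_Icc_iff_antitoneOn_deriv (M.continuousOn_valueOfBelief hp hVL hVH)
      fun μ hμ => (hW μ hμ).differentiableAt, ← M.image_priceMap_Ioo hp,
    ← ((M.strictMonoOn_priceMap hp).mono Ioo_subset_Icc_self).antitoneOn_comp_iff]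
  exact ⟨fun h => h.congr fun μ hμ => (hW μ hμ).deriv,
    fun h => h.congr fun μ hμ => (hW μ hμ).deriv.symm⟩

theorem convexOn_valueOfBelief_iff (M : BinaryMonopoly RL RH pL pH)
    (hp : IsPriceMap RL RH pL pH p) (hVL : ∀ q ∈ Icc pL pH, DifferentiableAt ℝ VL q)
    (hVH : ∀ q ∈ Icc pL pH, DifferentiableAt ℝ VH q) :
    ConvexOn ℝ (Icc 0 1) (valueOfBelief VL VH p) ↔
      MonotoneOn (marginalValue VL VH RL RH) (Ioo pL pH) := by
  have hW := fun μ (hμ : μ ∈ Ioo (0:ℝ) 1) => M.hasDerivAt_valueOfBelief hp hVL hVH hμ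
  rw [convexOn_Icc_iff_monotoneOn_deriv (M.continuousOn_valueOfBelief hp hVL hVH)
      fun μ hμ => (hW μ hμ).differentiableAt, ← M.image_priceMap_Ioo hp,
    ← ((M.strictMonoOn_priceMap hp).mono Ioo_subset_Icc_self).monotoneOn_comp_iff]
  exact ⟨fun h => h.congr fun μ hμ => (hW μ hμ).deriv,
    fun h => h.congr fun μ hμ => (hW μ hμ).deriv.symm⟩

theorem concaveOn_valueOfBelief_iff_monotoneOn {h h' : ℝ → ℝ} (M : BinaryMonopoly RL RH pL pH)
    (hp : IsPriceMap RL RH pL pH p) (hVL : ∀ q ∈ Icc pL pH, DifferentiableAt ℝ VL q)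
    (hVH : ∀ q ∈ Icc pL pH, DifferentiableAt ℝ VH q)
    (hE : ∀ q ∈ Ioo pL pH,
      HasDerivAt (marginalValue VL VH RL RH) ((deriv RL q - deriv RH q) * h' q) q)
    (hh : ∀ q ∈ Ioo pL pH, HasDerivAt h (h' q) q) :
    ConcaveOn ℝ (Icc 0 1) (valueOfBelief VL VH p) ↔ MonotoneOn h (Ioo pL pH) := by
  rw [M.concaveOn_valueOfBelief_iff hp hVL hVH]
  exact antitoneOn_Ioo_iff_monotoneOn_of_hasDerivAt_mul_neg hE hh fun q hq =>
    M.deriv_sub_neg (Ioo_subset_Icc_self hq)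

theorem convexOn_valueOfBelief_iff_antitoneOn {h h' : ℝ → ℝ} (M : BinaryMonopoly RL RH pL pH)
    (hp : IsPriceMap RL RH pL pH p) (hVL : ∀ q ∈ Icc pL pH, DifferentiableAt ℝ VL q)
    (hVH : ∀ q ∈ Icc pL pH, DifferentiableAt ℝ VH q)
    (hE : ∀ q ∈ Ioo pL pH,
      HasDerivAt (marginalValue VL VH RL RH) ((deriv RL q - deriv RH q) * h' q) q)
    (hh : ∀ q ∈ Ioo pL pH, HasDerivAt h (h' q) q) :
    ConvexOn ℝ (Icc 0 1) (valueOfBelief VL VH p) ↔ AntitoneOn h (Ioo pL pH) := by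
  rw [M.convexOn_valueOfBelief_iff hp hVL hVH]
  exact monotoneOn_Ioo_iff_antitoneOn_of_hasDerivAt_mul_neg hE hh fun q hq =>
    M.deriv_sub_neg (Ioo_subset_Icc_self hq)

end BinaryMonopoly

section Regularity

variable {f : ℝ → ℝ} {U : Set ℝ} {n : WithTop ℕ∞} {q : ℝ}

theorem ContDiffOn.differentiableAt_of_isOpen (hf : ContDiffOn ℝ n f U) (hU : IsOpen U)
    (hn : n ≠ 0) (hq : q ∈ U) : DifferentiableAt ℝ f q :=
  (hf.differentiableOn hn).differentiableAt (hU.mem_nhds hq)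

theorem ContDiffOn.differentiableAt_deriv_of_isOpen (hf : ContDiffOn ℝ n f U) (hU : IsOpen U)
    (hn : 2 ≤ n) (hq : q ∈ U) : DifferentiableAt ℝ (deriv f) q :=
  ContDiffOn.differentiableAt_of_isOpen
    (hf.deriv_of_isOpen hU (m := 1) (by simpa [one_add_one_eq_two] using hn)) hU one_ne_zero hq

end Regularity

def revenue (D : ℝ → ℝ) (q : ℝ) : ℝ := q * D q

def welfare (α : ℝ) (CS R : ℝ → ℝ) (q : ℝ) : ℝ := α * CS q + (1 - α) * R q

section ShiftedDemand

variable {D CSL CSH p : ℝ → ℝ} {I U : Set ℝ} {a b α q pL pH : ℝ}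

theorem contDiffOn_revenue {n : WithTop ℕ∞} (hD : ContDiffOn ℝ n D U) :
    ContDiffOn ℝ n (revenue D) U :=
  contDiffOn_id.mul hD

theorem hasDerivAt_revenue (hD : DifferentiableAt ℝ D q) :
    HasDerivAt (revenue D) (D q + q * deriv D q) q :=
  ((hasDerivAt_id q).mul hD.hasDerivAt).congr_deriv (by simp)

theorem hasDerivAt_welfare {CS R : ℝ → ℝ} {c r : ℝ} (hCS : HasDerivAt CS c q)
    (hR : HasDerivAt R r q) : HasDerivAt (welfare α CS R) (α * c + (1 - α) * r) q :=
  (hCS.const_mul α).add (hR.const_mul (1 - α))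

theorem hasDerivAt_revenue_shift (hR : DifferentiableAt ℝ (revenue D) q) :
    HasDerivAt (revenue fun s => a * (D s + b)) (a * deriv (revenue D) q + a * b) q := by
  have hfun : (revenue fun s => a * (D s + b)) = fun s => a * revenue D s + a * b * s := by
    funext s
    simp only [revenue]
    ring
  rw [hfun]
  exact ((hR.hasDerivAt.const_mul a).add ((hasDerivAt_id q).const_mul (a * b))).congr_deriv
    (by simp)

theorem hasDerivAt_deriv_revenue_shift (hU : IsOpen U) (hD : ContDiffOn ℝ 2 D U) (hq : q ∈ U) :
    HasDerivAt (deriv (revenue fun s => a * (D s + b))) (a * deriv (deriv (revenue D)) q) q :=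
  ((((contDiffOn_revenue hD).differentiableAt_deriv_of_isOpen hU le_rfl hq).hasDerivAt.const_mul
    a).add_const (a * b)).congr_of_eventuallyEq
    (eventually_of_mem (hU.mem_nhds hq) fun _ hs => (hasDerivAt_revenue_shift
      ((contDiffOn_revenue hD).differentiableAt_of_isOpen hU two_ne_zero hs)).deriv)

theorem binaryMonopoly_shift (hI : IsOpen I) (hIconv : Convex ℝ I) (hD : ContDiffOn ℝ 2 D I)
    (hR'' : ∀ q ∈ I, deriv (deriv (revenue D)) q < 0) (ha : 0 < a) (hb : b < 0) (hpL : pL ∈ I)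
    (hpH : pH ∈ I) (hRpL : deriv (revenue D) pL = -b) (hRpH : deriv (revenue D) pH = 0) :
    BinaryMonopoly (revenue fun s => a * (D s + b)) (revenue D) pL pH := by
  have hR := contDiffOn_revenue hD
  have hR2 : ∀ q ∈ I, DifferentiableAt ℝ (deriv (revenue D)) q := fun q hq =>
    hR.differentiableAt_deriv_of_isOpen hI le_rfl hq
  have hIcc : Icc pL pH ⊆ I := hIconv.ordConnected.out hpL hpH
  have hanti : StrictAntiOn (deriv (revenue D)) I :=
    strictAntiOn_of_deriv_neg hIconv (fun q hq => (hR2 q hq).continuousAt.continuousWithinAt)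
      fun q hq => hR'' q (interior_subset hq)
  have hlt : pL < pH := by
    by_contra! h
    linarith [hanti.antitoneOn hpH hpL h]
  refine ⟨hlt, fun q hq => (hasDerivAt_deriv_revenue_shift hI hD (hIcc hq)).differentiableAt,
    fun q hq => hR2 q (hIcc hq), fun q hq => ?_, fun q hq => hR'' q (hIcc hq), ?_, hRpH⟩
  · rw [(hasDerivAt_deriv_revenue_shift hI hD (hIcc hq)).deriv]
    exact mul_neg_of_pos_of_neg ha (hR'' q (hIcc hq))
  · rw [(hasDerivAt_revenue_shift (hR.differentiableAt_of_isOpen hI two_ne_zero hpL)).deriv, hRpL]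
    ring

theorem differentiableAt_mul_deriv_div_deriv_deriv (hU : IsOpen U) (hD : ContDiffOn ℝ 3 D U)
    (hR'' : deriv (deriv (revenue D)) q ≠ 0) (hq : q ∈ U) :
    DifferentiableAt ℝ (fun s => α * s * deriv D s / deriv (deriv (revenue D)) s) q :=
  ((differentiableAt_fun_id.const_mul α).mul
    (hD.differentiableAt_deriv_of_isOpen hU (by norm_num) hq)).div
    (ContDiffOn.differentiableAt_deriv_of_isOpen
      ((contDiffOn_revenue hD).deriv_of_isOpen hU (m := 2) (by norm_num)) hU le_rfl hq) hR''

theorem hasDerivAt_linear_add_mul_deriv_div_deriv_deriv (hU : IsOpen U)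
    (hD : ContDiffOn ℝ 3 D U) (hR'' : deriv (deriv (revenue D)) q ≠ 0) (hq : q ∈ U) :
    HasDerivAt (fun s => (2 * α - 1) * s + α * s * deriv D s / deriv (deriv (revenue D)) s)
      (-(1 - 2 * α) + deriv (fun s => α * s * deriv D s / deriv (deriv (revenue D)) s) q) q :=
  (((hasDerivAt_id q).const_mul (2 * α - 1)).add
    (differentiableAt_mul_deriv_div_deriv_deriv hU hD hR'' hq).hasDerivAt).congr_deriv (by ring)

theorem marginalValue_shift_eq (hU : IsOpen U) (hD : ContDiffOn ℝ 2 D U)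
    (hCSL : HasDerivAt CSL (-(a * (D q + b))) q) (hCSH : HasDerivAt CSH (-D q) q)
    (hab : a * b ≠ 0) (hR' : deriv (revenue D) q ≠ 0) (hR'' : deriv (deriv (revenue D)) q ≠ 0)
    (hq : q ∈ U) :
    marginalValue (welfare α CSL (revenue fun s => a * (D s + b))) (welfare α CSH (revenue D))
        (revenue fun s => a * (D s + b)) (revenue D) q =
      welfare α CSH (revenue D) q - welfare α CSL (revenue fun s => a * (D s + b)) q +
        α * q * deriv D q / deriv (deriv (revenue D)) q *
          (deriv (revenue fun s => a * (D s + b)) q - deriv (revenue D) q) := by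
  have hR1 := (contDiffOn_revenue hD).differentiableAt_of_isOpen hU two_ne_zero hq
  have hRL := hasDerivAt_revenue_shift (a := a) (b := b) hR1
  rw [marginalValue, (hasDerivAt_welfare hCSL hRL).deriv,
    (hasDerivAt_welfare hCSH hR1.hasDerivAt).deriv, hRL.deriv,
    (hasDerivAt_deriv_revenue_shift hU hD hq).deriv]
  congr 2
  have ha := left_ne_zero_of_mul hab
  have hb := right_ne_zero_of_mul hab
  rw [(hasDerivAt_revenue (hD.differentiableAt_of_isOpen hU two_ne_zero hq)).deriv] at hR' ⊢
  generalize deriv (deriv (revenue D)) q = r'' at *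
  generalize deriv D q = d' at *
  generalize D q = d at *
  have hden : a * r'' - (a * (d + q * d') + a * b) / (d + q * d') * r'' =
      -(a * b * r'') / (d + q * d') := by
    field_simp
    ring
  rw [hden, div_eq_div_iff (div_ne_zero (by simp [ha, hb, hR'']) hR') hR'']
  field_simp
  ring

theorem hasDerivAt_marginalValue_shift (hU : IsOpen U) (hD : ContDiffOn ℝ 3 D U)
    (hCSL : ∀ s ∈ U, HasDerivAt CSL (-(a * (D s + b))) s)
    (hCSH : ∀ s ∈ U, HasDerivAt CSH (-D s) s)
    (hab : a * b ≠ 0) (hR' : ∀ s ∈ U, deriv (revenue D) s ≠ 0)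
    (hR'' : ∀ s ∈ U, deriv (deriv (revenue D)) s ≠ 0) (hq : q ∈ U) :
    HasDerivAt (marginalValue (welfare α CSL (revenue fun s => a * (D s + b)))
        (welfare α CSH (revenue D)) (revenue fun s => a * (D s + b)) (revenue D))
      ((deriv (revenue fun s => a * (D s + b)) q - deriv (revenue D) q) *
        (-(1 - 2 * α) + deriv (fun s => α * s * deriv D s / deriv (deriv (revenue D)) s) q))
      q := by
  have hD2 : ContDiffOn ℝ 2 D U := hD.of_le (by norm_num)
  have hR1 := (contDiffOn_revenue hD).differentiableAt_of_isOpen hU three_ne_zero hq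
  have hR2 := (contDiffOn_revenue hD).differentiableAt_deriv_of_isOpen hU (by norm_num) hq
  have hF := (differentiableAt_mul_deriv_div_deriv_deriv (α := α) hU hD (hR'' q hq) hq).hasDerivAt
  have hVL := hasDerivAt_welfare (α := α) (hCSL q hq)
    (hasDerivAt_revenue_shift (a := a) (b := b) hR1)
  have hVH := hasDerivAt_welfare (α := α) (hCSH q hq) hR1.hasDerivAt
  have hG := (hasDerivAt_deriv_revenue_shift (a := a) (b := b) hU hD2 hq).sub hR2.hasDerivAt
  refine (((hVH.sub hVL).add (hF.mul hG)).congr_of_eventuallyEq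
    (eventually_of_mem (hU.mem_nhds hq) fun s hs =>
      marginalValue_shift_eq hU hD2 (hCSL s hs) (hCSH s hs) hab (hR' s hs) (hR'' s hs)
        hs)).congr_deriv ?_
  rw [Pi.sub_apply, (hasDerivAt_revenue_shift hR1).deriv,
    (hasDerivAt_revenue (hD.differentiableAt_of_isOpen hU three_ne_zero hq)).deriv]
  have := hR'' q hq
  generalize deriv (fun s => α * s * deriv D s / deriv (deriv (revenue D)) s) q = F'
  field_simp
  ring

theorem hasDerivAt_marginalValue_and_concavity_shift (hI : IsOpen I) (hIconv : Convex ℝ I)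
    (hD : ContDiffOn ℝ 3 D I) (hR'' : ∀ q ∈ I, deriv (deriv (revenue D)) q < 0) (ha : 0 < a)
    (hb : b < 0) (hpL : pL ∈ I) (hpH : pH ∈ I) (hRpL : deriv (revenue D) pL = -b)
    (hRpH : deriv (revenue D) pH = 0) (hCSL : ∀ q ∈ I, HasDerivAt CSL (-(a * (D q + b))) q)
    (hCSH : ∀ q ∈ I, HasDerivAt CSH (-D q) q)
    (hp : IsPriceMap (revenue fun s => a * (D s + b)) (revenue D) pL pH p) :
    (∀ q ∈ Ioo pL pH,
      HasDerivAt (marginalValue (welfare α CSL (revenue fun s => a * (D s + b)))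
          (welfare α CSH (revenue D)) (revenue fun s => a * (D s + b)) (revenue D))
        ((deriv (revenue fun s => a * (D s + b)) q - deriv (revenue D) q) *
          (-(1 - 2 * α) + deriv (fun s => α * s * deriv D s / deriv (deriv (revenue D)) s) q))
        q) ∧
    (ConcaveOn ℝ (Icc 0 1) (valueOfBelief (welfare α CSL (revenue fun s => a * (D s + b)))
        (welfare α CSH (revenue D)) p) ↔
      MonotoneOn (fun s => (2 * α - 1) * s + α * s * deriv D s / deriv (deriv (revenue D)) s)
        (Ioo pL pH)) ∧
    (ConvexOn ℝ (Icc 0 1) (valueOfBelief (welfare α CSL (revenue fun s => a * (D s + b)))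
        (welfare α CSH (revenue D)) p) ↔
      AntitoneOn (fun s => (2 * α - 1) * s + α * s * deriv D s / deriv (deriv (revenue D)) s)
        (Ioo pL pH)) := by
  have M := binaryMonopoly_shift hI hIconv (hD.of_le (by norm_num)) hR'' ha hb hpL hpH hRpL hRpH
  have hIcc : Icc pL pH ⊆ I := hIconv.ordConnected.out hpL hpH
  have hIoo : Ioo pL pH ⊆ I := Ioo_subset_Icc_self.trans hIcc
  have hR1 : ∀ q ∈ I, DifferentiableAt ℝ (revenue D) q := fun q hq =>
    (contDiffOn_revenue hD).differentiableAt_of_isOpen hI three_ne_zero hq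
  have hVL : ∀ q ∈ Icc pL pH,
      DifferentiableAt ℝ (welfare α CSL (revenue fun s => a * (D s + b))) q := fun q hq =>
    (hasDerivAt_welfare (hCSL q (hIcc hq))
      (hasDerivAt_revenue_shift (hR1 q (hIcc hq)))).differentiableAt
  have hVH : ∀ q ∈ Icc pL pH, DifferentiableAt ℝ (welfare α CSH (revenue D)) q := fun q hq =>
    (hasDerivAt_welfare (hCSH q (hIcc hq)) (hR1 q (hIcc hq)).hasDerivAt).differentiableAt
  have hE := fun q (hq : q ∈ Ioo pL pH) => hasDerivAt_marginalValue_shift (α := α) isOpen_Ioo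
    (hD.mono hIoo) (fun s hs => hCSL s (hIoo hs)) (fun s hs => hCSH s (hIoo hs))
    (mul_ne_zero ha.ne' hb.ne) (fun s hs => (M.deriv_right_pos (Ioo_subset_Icc_self hs) hs.2).ne')
    (fun s hs => (hR'' s (hIoo hs)).ne) hq
  have hh := fun q (hq : q ∈ Ioo pL pH) => hasDerivAt_linear_add_mul_deriv_div_deriv_deriv
    (α := α) hI hD (hR'' q (hIoo hq)).ne (hIoo hq)
  exact ⟨hE, M.concaveOn_valueOfBelief_iff_monotoneOn hp hVL hVH hE hh,
    M.convexOn_valueOfBelief_iff_antitoneOn hp hVL hVH hE hh⟩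

end ShiftedDemand

theorem stmt_8_general
    (I : Set ℝ) (D : ℝ → ℝ) (a b : ℝ)
    (hIopen : IsOpen I) (hIconv : Convex ℝ I)
    (hD : ContDiffOn ℝ 3 D I) (hD' : ∀ q ∈ I, deriv D q < 0)
    (R : ℝ → ℝ) (hR : R = fun q => q * D q)
    (hR'' : ∀ q ∈ I, deriv (deriv R) q < 0)
    (ha : 0 < a) (hb : b < 0) (hDb : ∀ q ∈ I, 0 < D q + b)
    (pLs pHs : ℝ) (hpLs : pLs ∈ I) (hpHs : pHs ∈ I)
    (hRpL : deriv R pLs = -b) (hRpH : deriv R pHs = 0)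
    (DL DH RL RH : ℝ → ℝ)
    (hDL : DL = fun q => a * (D q + b)) (hDH : DH = D)
    (hRL : RL = fun q => q * DL q) (hRH : RH = fun q => q * DH q)
    (p : ℝ → ℝ)
    (hp : ∀ μ ∈ Set.Icc (0:ℝ) 1, p μ ∈ Set.Icc pLs pHs ∧
      (1 - μ) * deriv RL (p μ) + μ * deriv RH (p μ) = 0)
    (CSL CSH : ℝ → ℝ)
    (hCSL : ∀ q ∈ I, HasDerivAt CSL (-(DL q)) q)
    (hCSH : ∀ q ∈ I, HasDerivAt CSH (-(DH q)) q)
    (VL VH : ℝ → ℝ → ℝ)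
    (hVL : ∀ α : ℝ, VL α = fun q => α * CSL q + (1 - α) * RL q)
    (hVH : ∀ α : ℝ, VH α = fun q => α * CSH q + (1 - α) * RH q)
    (E : ℝ → ℝ → ℝ)
    (hE : ∀ α q : ℝ, E α q =
      VH α q - VL α q +
        (deriv (VL α) q - (deriv RL q / deriv RH q) * deriv (VH α) q) /
          (deriv (deriv RL) q - (deriv RL q / deriv RH q) * deriv (deriv RH) q) *
          (deriv RL q - deriv RH q))
    (W : ℝ → ℝ → ℝ)
    (hW : ∀ α : ℝ, W α = fun μ => (1 - μ) * VL α (p μ) + μ * VH α (p μ)) :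
    pLs < pHs ∧
    (∀ q ∈ I, 0 < DL q) ∧ (∀ q ∈ I, deriv DL q < 0) ∧
    (∀ q ∈ I, deriv (deriv RL) q < 0) ∧ (∀ q ∈ I, deriv (deriv RH) q < 0) ∧
    deriv RL pLs = 0 ∧ deriv RH pHs = 0 ∧
    ∀ α ∈ Set.Ioc (0:ℝ) 1,
      (∀ q ∈ Set.Ioo pLs pHs,
        HasDerivAt (E α)
          ((deriv RL q - deriv RH q) *
            (-(1 - 2 * α) +
              deriv (fun s => α * s * deriv D s / deriv (deriv R) s) q)) q) ∧
      (ConcaveOn ℝ (Set.Icc (0:ℝ) 1) (W α) ↔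
        MonotoneOn (fun q => (2 * α - 1) * q + α * q * deriv D q / deriv (deriv R) q)
          (Set.Ioo pLs pHs)) ∧
      (ConvexOn ℝ (Set.Icc (0:ℝ) 1) (W α) ↔
        AntitoneOn (fun q => (2 * α - 1) * q + α * q * deriv D q / deriv (deriv R) q)
          (Set.Ioo pLs pHs)) := by
  subst R DH DL
  have hRL' : RL = revenue fun q => a * (D q + b) := hRL
  have hRH' : RH = revenue D := hRH
  have M : BinaryMonopoly RL RH pLs pHs := by
    rw [hRL', hRH']
    exact binaryMonopoly_shift hIopen hIconv (hD.of_le (by norm_num)) hR'' ha hb hpLs hpHs hRpL hRpH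
  refine ⟨M.lt, fun q hq => mul_pos ha (hDb q hq), fun q hq => ?_, fun q hq => ?_,
    fun q hq => hRH' ▸ hR'' q hq, M.deriv_left_eq_zero, M.deriv_right_eq_zero, fun α _ => ?_⟩
  · rw [(((hD.differentiableAt_of_isOpen hIopen three_ne_zero hq).hasDerivAt.add_const
      b).const_mul a).deriv]
    exact mul_neg_of_pos_of_neg ha (hD' q hq)
  · rw [hRL', (hasDerivAt_deriv_revenue_shift hIopen (hD.of_le (by norm_num)) hq).deriv]
    exact mul_neg_of_pos_of_neg ha (hR'' q hq)
  rw [show E α = marginalValue (VL α) (VH α) RL RH from funext (hE α),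
    show W α = valueOfBelief (VL α) (VH α) p from hW α,
    show VL α = welfare α CSL RL from hVL α, show VH α = welfare α CSH RH from hVH α, hRL',
    hRH']
  rw [hRL', hRH'] at hp
  exact hasDerivAt_marginalValue_and_concavity_shift hIopen hIconv hD hR'' ha hb hpLs hpHs hRpL
    hRpH hCSL hCSH hp

/-- (Corollary for the family `a·(D+b)`.) With `D_L = a·(D+b)` and `D_H = D`,
the pair forms a binary monopoly model with monopoly prices `p_L* < p_H*` determined by
`R'(p_L*) = −b`, `R'(p_H*) = 0`, the derivative of the marginal expression simplifies as in
(i), and `W^α` is concave (convex) on `[0,1]` iff `p ↦ (2α−1)p + α·p·D'(p)/R''(p)` is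
nondecreasing (nonincreasing) on `(p_L*, p_H*)`. -/
theorem stmt_8
    (I : Set ℝ) (D : ℝ → ℝ) (a b : ℝ)
    (hIopen : IsOpen I) (hIconv : Convex ℝ I) (hIpos : I ⊆ Set.Ioi (0:ℝ))
    (hD : ContDiffOn ℝ 3 D I) (hDpos : ∀ q ∈ I, 0 < D q) (hD' : ∀ q ∈ I, deriv D q < 0)
    (R : ℝ → ℝ) (hR : R = fun q => q * D q)
    (hR'' : ∀ q ∈ I, deriv (deriv R) q < 0)
    (ha : 0 < a) (hb : b < 0) (hDb : ∀ q ∈ I, 0 < D q + b)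
    (pLs pHs : ℝ) (hpLs : pLs ∈ I) (hpHs : pHs ∈ I)
    (hRpL : deriv R pLs = -b) (hRpH : deriv R pHs = 0)
    (DL DH RL RH : ℝ → ℝ)
    (hDL : DL = fun q => a * (D q + b)) (hDH : DH = D)
    (hRL : RL = fun q => q * DL q) (hRH : RH = fun q => q * DH q)
    (p : ℝ → ℝ)
    (hp : ∀ μ ∈ Set.Icc (0:ℝ) 1, p μ ∈ Set.Icc pLs pHs ∧
      (1 - μ) * deriv RL (p μ) + μ * deriv RH (p μ) = 0)
    (CSL CSH : ℝ → ℝ)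
    (hCSL : ∀ q ∈ I, HasDerivAt CSL (-(DL q)) q)
    (hCSH : ∀ q ∈ I, HasDerivAt CSH (-(DH q)) q)
    (VL VH : ℝ → ℝ → ℝ)
    (hVL : ∀ α : ℝ, VL α = fun q => α * CSL q + (1 - α) * RL q)
    (hVH : ∀ α : ℝ, VH α = fun q => α * CSH q + (1 - α) * RH q)
    (E : ℝ → ℝ → ℝ)
    (hE : ∀ α q : ℝ, E α q =
      VH α q - VL α q +
        (deriv (VL α) q - (deriv RL q / deriv RH q) * deriv (VH α) q) /
          (deriv (deriv RL) q - (deriv RL q / deriv RH q) * deriv (deriv RH) q) *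
          (deriv RL q - deriv RH q))
    (W : ℝ → ℝ → ℝ)
    (hW : ∀ α : ℝ, W α = fun μ => (1 - μ) * VL α (p μ) + μ * VH α (p μ)) :
    pLs < pHs ∧
    (∀ q ∈ I, 0 < DL q) ∧ (∀ q ∈ I, deriv DL q < 0) ∧
    (∀ q ∈ I, deriv (deriv RL) q < 0) ∧ (∀ q ∈ I, deriv (deriv RH) q < 0) ∧
    deriv RL pLs = 0 ∧ deriv RH pHs = 0 ∧
    ∀ α ∈ Set.Ioc (0:ℝ) 1,
      (∀ q ∈ Set.Ioo pLs pHs,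
        HasDerivAt (E α)
          ((deriv RL q - deriv RH q) *
            (-(1 - 2 * α) +
              deriv (fun s => α * s * deriv D s / deriv (deriv R) s) q)) q) ∧
      (ConcaveOn ℝ (Set.Icc (0:ℝ) 1) (W α) ↔
        MonotoneOn (fun q => (2 * α - 1) * q + α * q * deriv D q / deriv (deriv R) q)
          (Set.Ioo pLs pHs)) ∧
      (ConvexOn ℝ (Set.Icc (0:ℝ) 1) (W α) ↔
        AntitoneOn (fun q => (2 * α - 1) * q + α * q * deriv D q / deriv (deriv R) q)
          (Set.Ioo pLs pHs)) :=
  stmt_8_general I D a b hIopen hIconv hD hD' R hR hR'' ha hb hDb pLs pHs hpLs hpHs hRpL hRpH DL DH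
    RL RH hDL hDH hRL hRH p hp CSL CSH hCSL hCSH VL VH hVL hVH E hE W hW
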